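/- Let G be an extended parity game with parity sequence α = F · α' where F is an even parity set. Then Win_1(G) equals the least fixed point μY.(Q \ Win_0(α', V ∪ (F \ Y), A ∪ (F ∩ Y))), where Win_0(β, V', A') denotes the winning region of Player 0 in the extended parity game with parity sequence β, visiting set V' and avoiding set A'. -/

import Mathlib

/-- A parity game: disjoint node sets for Player 0 (`Q0`) and Player 1 (`Q1`)
covering `Q`, a left-total move relation `R`, and a priority function `p`. -/
structure ParityGame (Q : Type) where
  Q0 : Set Q
  Q1 : Set Q
  disj : Disjoint Q0 Q1
  covers : Q0 ∪ Q1 = Set.univ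
  R : Q → Q → Prop
  total : ∀ q, ∃ q', R q q'
  p : Q → ℕ

namespace ParityGame

variable {Q : Type} (G : ParityGame Q)

/-- The nodes of player `i` (`false` = Player 0, `true` = Player 1). -/
def nodes (i : Bool) : Set Q := if i then G.Q1 else G.Q0

/-- An (infinite) play: a sequence of nodes agreeing with the move relation. -/
def IsPlay (π : ℕ → Q) : Prop := ∀ n, G.R (π n) (π (n + 1))

/-- The set of priorities occurring infinitely often along `π`. -/
def InfPrio (π : ℕ → Q) : Set ℕ := {c | ∀ N, ∃ n, N ≤ n ∧ G.p (π n) = c}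

/-- Player `i` wins play `π` iff the minimal priority occurring infinitely
often has parity `i` (even for Player 0, odd for Player 1). -/
def WinsPlay (i : Bool) (π : ℕ → Q) : Prop :=
  if i then Odd (sInf (G.InfPrio π)) else Even (sInf (G.InfPrio π))

/-- A strategy for player `i` maps (strict past history, current node) to a
successor; it is legal if it always chooses an `R`-successor at `i`'s nodes. -/
def Legal (i : Bool) (σ : List Q → Q → Q) : Prop :=
  ∀ h q, q ∈ G.nodes i → G.R q (σ h q)

/-- A play is consistent with a strategy `σ` of player `i` if at every node of
player `i` the next node is the one chosen by `σ` on the history so far. -/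
def Consistent (i : Bool) (σ : List Q → Q → Q) (π : ℕ → Q) : Prop :=
  ∀ n, π n ∈ G.nodes i → π (n + 1) = σ (List.ofFn (fun k : Fin n => π k)) (π n)

/-- The winning region of player `i`: nodes from which `i` has a legal strategy
all of whose consistent plays are winning for `i`. -/
def WinRegion (i : Bool) : Set Q :=
  {q | ∃ σ, G.Legal i σ ∧
    ∀ π, G.IsPlay π → π 0 = q → G.Consistent i σ π → G.WinsPlay i π}

/-- `force i X`: the nodes from which player `i` can force the next node
to be in `X`. -/
def force (i : Bool) (X : Set Q) : Set Q :=
  {q | q ∈ G.nodes i ∧ ∃ q' ∈ X, G.R q q'} ∪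
  {q | q ∈ G.nodes !i ∧ ∀ q', G.R q q' → q' ∈ X}

/-- Extended-parity-game winning condition for player `i`, with visiting set
`V` and avoiding set `A`: player `i` wins `π` iff (after the first position)
`π` hits its target set before the opponent's one, or `π` forever avoids
`V ∪ A` and satisfies `i`'s parity condition. -/
def EWinsPlay (i : Bool) (V A : Set Q) (π : ℕ → Q) : Prop :=
  (∃ n, 1 ≤ n ∧ π n ∈ (if i then A else V) ∧
    ∀ m, 1 ≤ m → m < n → π m ∉ (if i then V else A)) ∨
  ((∀ n, 1 ≤ n → π n ∉ V ∪ A) ∧ G.WinsPlay i π)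

/-- The winning region of player `i` in the extended parity game on `G` with
visiting set `V` and avoiding set `A`. -/
def EWinRegion (i : Bool) (V A : Set Q) : Set Q :=
  {q | ∃ σ, G.Legal i σ ∧
    ∀ π, G.IsPlay π → π 0 = q → G.Consistent i σ π → G.EWinsPlay i V A π}

end ParityGame

/-!
Let `f Y = Q \ Win₀(V ∪ (F \ Y), A ∪ (F ∩ Y))` and `L = μ f`. Both inclusions come from the same
construction: a player fixes, for each node `x`, a strategy `t x` winning a game in which part of
`F` counts as her target, and restarts with `t x` whenever the play visits `x ∈ F`.

Player 0 wins from `Lᶜ`: as `L = f L`, from `Lᶜ` she wins the game where `F \ L` is her target.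
Restarting at each visit to `F`, she either wins with the last strategy she started, or visits `F`
infinitely often while avoiding `V ∪ A`, and then the minimal priority seen infinitely often is the
even `d`. Player 1 wins from `L`: each `x ∈ L` lies in `f Y` with `Y` the nodes of smaller rank in
the Kleene iteration, and if the subgames are determined, player 1 wins the game where `F ∩ Y` is
his target. Ranks strictly decrease along visits to `F`, so there are finitely many of them and the
last strategy decides the play.

The determinacy of the subgames follows from the same two inclusions, by induction on the number of
nodes outside `V ∪ A`, passing to the dual game (players exchanged, priorities shifted by one) when
the minimal priority is odd.
-/

section LastVisit

variable {Q : Type}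

open Classical in
noncomputable def lastVisit (F : Set Q) (π : ℕ → Q) : ℕ → ℕ
  | 0 => 0
  | n + 1 => if π (n + 1) ∈ F then n + 1 else lastVisit F π n

variable {F : Set Q} {π : ℕ → Q}

lemma lastVisit_le (n : ℕ) : lastVisit F π n ≤ n := by
  induction n with
  | zero => rfl
  | succ n ih => unfold lastVisit; split_ifs <;> omega

lemma lastVisit_eq_zero_or_mem (n : ℕ) : lastVisit F π n = 0 ∨ π (lastVisit F π n) ∈ F := by
  induction n with
  | zero => exact Or.inl rfl
  | succ n ih => unfold lastVisit; split_ifs with h; exacts [Or.inr h, ih]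

lemma notMem_of_lastVisit_lt {n j : ℕ} (hj : lastVisit F π n < j) (hjn : j ≤ n) : π j ∉ F := by
  induction n with
  | zero => exact absurd hj (by simp [lastVisit]; omega)
  | succ n ih =>
    unfold lastVisit at hj
    split_ifs at hj with h
    · omega
    · rcases hjn.lt_or_eq with hjn | rfl
      exacts [ih hj (by omega), h]

lemma lastVisit_eq_of {r n : ℕ} (hrn : r ≤ n) (hr : r = 0 ∨ π r ∈ F)
    (hF : ∀ j, r < j → j ≤ n → π j ∉ F) : lastVisit F π n = r := by
  induction n with
  | zero => rw [Nat.le_zero.mp hrn]; rfl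
  | succ n ih =>
    unfold lastVisit
    rcases hrn.lt_or_eq with hrn | rfl
    · rw [if_neg (hF _ hrn le_rfl)]
      exact ih (by omega) fun j hj hjn => hF j hj (by omega)
    · rw [if_pos (hr.resolve_left (by omega))]

lemma lastVisit_congr {π' : ℕ → Q} {n : ℕ} (h : ∀ j ≤ n, π' j = π j) :
    lastVisit F π' n = lastVisit F π n := by
  refine lastVisit_eq_of (lastVisit_le n) ?_ fun j hj hjn => h j hjn ▸ notMem_of_lastVisit_lt hj hjn
  rw [h _ (lastVisit_le n)]
  exact lastVisit_eq_zero_or_mem n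

end LastVisit

lemma OrderHom.exists_rank_of_mem_lfp {α : Type*} [Finite α] (f : Set α →o Set α) :
    ∃ rk : α → ℕ, ∀ x ∈ f.lfp, x ∈ f {y | y ∈ f.lfp ∧ rk y < rk x} := by
  have hiter : ∀ n, f^[n] ∅ ⊆ f.lfp := by
    intro n
    induction n with
    | zero => exact Set.empty_subset _
    | succ n ih => rw [Function.iterate_succ_apply']; exact f.map_le_lfp ih
  obtain ⟨N, hN⟩ := WellFoundedGT.monotone_chain_condition
    ⟨_, f.monotone.monotone_iterate_of_le_map (Set.empty_subset (f ∅))⟩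
  have hlfp : f.lfp ⊆ f^[N] ∅ := f.lfp_le <| by
    rw [← Function.iterate_succ_apply' f N]
    exact (hN (N + 1) N.le_succ).ge
  let rk : α → ℕ := fun x => sInf {n | x ∈ f^[n] ∅}
  have hrk : ∀ x n, x ∈ f^[n] ∅ → rk x ≤ n := fun x n hx => Nat.sInf_le hx
  refine ⟨rk, fun x hx => ?_⟩
  have hmem : x ∈ f^[rk x] ∅ := Nat.sInf_mem (s := {n | x ∈ f^[n] ∅}) ⟨N, hlfp hx⟩
  obtain ⟨k, hk⟩ : ∃ k, rk x = k + 1 :=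
    Nat.exists_eq_succ_of_ne_zero fun h => by rw [h] at hmem; exact hmem
  rw [hk, Function.iterate_succ_apply'] at hmem
  have hsub : f^[k] ∅ ⊆ {y | y ∈ f.lfp ∧ rk y < rk x} := fun y hy =>
    ⟨hiter k hy, hk ▸ Nat.lt_succ_of_le (hrk y k hy)⟩
  exact f.monotone hsub hmem

namespace ParityGame

variable {Q : Type}

section Plays

variable (G : ParityGame Q)

lemma mem_nodes_not {i : Bool} {q : Q} (h : q ∉ G.nodes i) : q ∈ G.nodes !i := by
  have hq : q ∈ G.Q0 ∪ G.Q1 := G.covers ▸ Set.mem_univ q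
  cases i <;> simp_all [nodes]

lemma notMem_nodes_not {i : Bool} {q : Q} (h : q ∈ G.nodes i) : q ∉ G.nodes !i := by
  have := G.disj
  cases i <;> simp only [nodes, Bool.not_false, Bool.not_true] at h ⊢ <;>
    [exact Set.disjoint_left.mp this h; exact Set.disjoint_right.mp this h]

noncomputable def someSucc (q : Q) : Q := (G.total q).choose

lemma R_someSucc (q : Q) : G.R q (G.someSucc q) := (G.total q).choose_spec

noncomputable def unfoldPlay (next : List Q → Q → Q) (q₀ : Q) : ℕ → Q
  | 0 => q₀
  | n + 1 => next (List.ofFn fun k : Fin n => unfoldPlay next q₀ k) (unfoldPlay next q₀ n)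

@[simp]
lemma unfoldPlay_zero (next : List Q → Q → Q) (q₀ : Q) : unfoldPlay next q₀ 0 = q₀ := by
  rw [unfoldPlay]

lemma unfoldPlay_succ (next : List Q → Q → Q) (q₀ : Q) (n : ℕ) :
    unfoldPlay next q₀ (n + 1) =
      next (List.ofFn fun k : Fin n => unfoldPlay next q₀ k) (unfoldPlay next q₀ n) := by
  rw [unfoldPlay]

lemma exists_play_consistent_both {σ τ : List Q → Q → Q} (hσ : G.Legal false σ)
    (hτ : G.Legal true τ) (q : Q) :
    ∃ π, G.IsPlay π ∧ π 0 = q ∧ G.Consistent false σ π ∧ G.Consistent true τ π := by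
  classical
  set π := unfoldPlay (fun h x => if x ∈ G.nodes false then σ h x else τ h x) q
  refine ⟨π, fun n => ?_, unfoldPlay_zero _ _, fun n hn => ?_, fun n hn => ?_⟩
  · by_cases hn : π n ∈ G.nodes false
    · simpa [π, unfoldPlay_succ, hn] using hσ _ _ hn
    · simpa [π, unfoldPlay_succ, hn] using hτ _ _ (G.mem_nodes_not hn)
  · simp [π, unfoldPlay_succ, hn]
  · have hn' : π n ∉ G.nodes false := G.notMem_nodes_not hn
    simp [π, unfoldPlay_succ, hn']

def ConsistentUpTo (i : Bool) (σ : List Q → Q → Q) (π : ℕ → Q) (m : ℕ) : Prop :=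
  ∀ n < m, π n ∈ G.nodes i → π (n + 1) = σ (List.ofFn fun k : Fin n => π k) (π n)

lemma exists_consistent_of_consistentUpTo {i : Bool} {σ : List Q → Q → Q} (hσ : G.Legal i σ)
    {π : ℕ → Q} (hπ : G.IsPlay π) {m : ℕ} (hc : G.ConsistentUpTo i σ π m) :
    ∃ π', G.IsPlay π' ∧ G.Consistent i σ π' ∧ ∀ k ≤ m, π' k = π k := by
  classical
  set π' := unfoldPlay (fun h x => if h.length < m then π (h.length + 1)
    else if x ∈ G.nodes i then σ h x else G.someSucc x) (π 0)
  have hlt : ∀ n < m, π' (n + 1) = π (n + 1) := fun n hn => by simp [π', unfoldPlay_succ, hn]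
  have hge : ∀ n, m ≤ n → π' (n + 1) = if π' n ∈ G.nodes i
      then σ (List.ofFn fun k : Fin n => π' k) (π' n) else G.someSucc (π' n) := fun n hn => by
    simp [π', unfoldPlay_succ, Nat.not_lt.mpr hn]
  have hagree : ∀ k ≤ m, π' k = π k := by
    rintro (_ | k) hk
    · exact unfoldPlay_zero _ _
    · exact hlt k hk
  have hhist : ∀ n < m, (List.ofFn fun k : Fin n => π' k) = List.ofFn fun k : Fin n => π k :=
    fun n hn => List.ofFn_inj.mpr (funext fun k => hagree k (by omega))
  refine ⟨π', fun n => ?_, fun n hn => ?_, hagree⟩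
  · rcases Nat.lt_or_ge n m with hn | hn
    · rw [hlt n hn, hagree n hn.le]
      exact hπ n
    · rw [hge n hn]
      split_ifs with hi
      exacts [hσ _ _ hi, G.R_someSucc _]
  · rcases Nat.lt_or_ge n m with hnm | hnm
    · rw [hagree n hnm.le] at hn
      rw [hlt n hnm, hc n hnm hn, hhist n hnm, hagree n hnm.le]
    · rw [hge n hnm, if_pos hn]

lemma notMem_of_eWinsPlay_false {V A : Set Q} (hVA : Disjoint V A) {π : ℕ → Q}
    (hπ : G.EWinsPlay false V A π) {m : ℕ} (hm : 1 ≤ m) (hV : ∀ k, 1 ≤ k → k < m → π k ∉ V) :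
    π m ∉ A := by
  intro hA
  rcases hπ with ⟨n, hn, hnV, hnA⟩ | ⟨havoid, -⟩
  · rcases lt_trichotomy n m with h | rfl | h
    · exact hV n hn h hnV
    · exact hVA.ne_of_mem hnV hA rfl
    · exact hnA m hm h hA
  · exact havoid m hm (Or.inr hA)

lemma disjoint_eWinRegion {V A : Set Q} (hVA : Disjoint V A) :
    Disjoint (G.EWinRegion false V A) (G.EWinRegion true V A) := by
  rw [Set.disjoint_left]
  rintro q ⟨σ, hσ, hσwin⟩ ⟨τ, hτ, hτwin⟩
  obtain ⟨π, hπ, h0, hσπ, hτπ⟩ := G.exists_play_consistent_both hσ hτ q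
  have h0win := hσwin π hπ h0 hσπ
  rcases hτwin π hπ h0 hτπ with ⟨n, hn, hnA, hnV⟩ | ⟨havoid, hodd⟩
  · exact G.notMem_of_eWinsPlay_false hVA h0win hn hnV hnA
  · rcases h0win with ⟨n, hn, hnV, -⟩ | ⟨-, heven⟩
    · exact havoid n hn (Or.inl hnV)
    · exact Nat.not_even_iff_odd.mpr hodd heven

lemma infPrio_nonempty [Finite Q] (π : ℕ → Q) : (G.InfPrio π).Nonempty := by
  obtain ⟨q, hq⟩ := Finite.exists_infinite_fiber π
  refine ⟨G.p q, fun N => ?_⟩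
  obtain ⟨n, hn, hNn⟩ := (Set.infinite_coe_iff.mp hq).exists_gt N
  exact ⟨n, hNn.le, by rw [show π n = q from hn]⟩

lemma infPrio_shift (π : ℕ → Q) (r : ℕ) : G.InfPrio (fun k => π (r + k)) = G.InfPrio π := by
  ext c
  constructor
  · intro h N
    obtain ⟨k, hk, hkc⟩ := h N
    exact ⟨r + k, by omega, hkc⟩
  · intro h N
    obtain ⟨n, hn, hnc⟩ := h (N + r)
    exact ⟨n - r, by omega, by simpa only [Nat.add_sub_cancel' (by omega : r ≤ n)]⟩

lemma winsPlay_shift (i : Bool) (π : ℕ → Q) (r : ℕ) :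
    G.WinsPlay i (fun k => π (r + k)) ↔ G.WinsPlay i π := by
  rw [WinsPlay, WinsPlay, infPrio_shift]

lemma force_subset_eWinRegion (i : Bool) (V A : Set Q) :
    G.force i (if i then A else V) ⊆ G.EWinRegion i V A := by
  classical
  set X := if i then A else V
  intro q hq
  let σ : List Q → Q → Q := fun _ x => if h : ∃ y ∈ X, G.R x y then h.choose else G.someSucc x
  have hσ : G.Legal i σ := fun _ x _ => by
    by_cases h : ∃ y ∈ X, G.R x y
    · simpa [σ, h] using h.choose_spec.2
    · simpa [σ, h] using G.R_someSucc x
  refine ⟨σ, hσ, fun π hπ h0 hc => Or.inl ⟨1, le_rfl, ?_, fun m hm hm' => by omega⟩⟩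
  subst h0
  rcases hq with ⟨hi, hex⟩ | ⟨-, hall⟩
  · rw [hc 0 hi]
    simpa [σ, hex] using hex.choose_spec.1
  · exact hall _ (hπ 0)

lemma force_union_force_compl (i : Bool) (X : Set Q) :
    G.force i X ∪ G.force (!i) Xᶜ = Set.univ := by
  refine Set.eq_univ_of_forall fun q => ?_
  by_cases hi : q ∈ G.nodes i
  · by_cases hX : ∃ y ∈ X, G.R q y
    · exact Or.inl (Or.inl ⟨hi, hX⟩)
    · push Not at hX
      refine Or.inr (Or.inr ⟨by rwa [Bool.not_not], fun y hy hyX => hX y hyX hy⟩)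
  · by_cases hX : ∃ y ∈ Xᶜ, G.R q y
    · exact Or.inr (Or.inl ⟨G.mem_nodes_not hi, hX⟩)
    · push Not at hX
      exact Or.inl (Or.inr ⟨G.mem_nodes_not hi, fun y hy => not_not.mp (hX y · hy)⟩)

lemma eWinRegion_false_mono {V A V' A' : Set Q} (hV : V ⊆ V') (hA : A' ⊆ A)
    (hVA : V ∪ A = V' ∪ A') : G.EWinRegion false V A ⊆ G.EWinRegion false V' A' := by
  rintro q ⟨σ, hσ, hwin⟩
  refine ⟨σ, hσ, fun π hπ h0 hc => ?_⟩
  rcases hwin π hπ h0 hc with ⟨n, hn, hnV, hnA⟩ | ⟨havoid, heven⟩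
  · exact Or.inl ⟨n, hn, hV hnV, fun m hm hmn hmA => hnA m hm hmn (hA hmA)⟩
  · exact Or.inr ⟨hVA ▸ havoid, heven⟩

/-- Follow the strategy `t x`, where `x` is the node of the last visit to `F` (or the initial
node), on the part of the history since that visit. -/
noncomputable def restartStrategy (F : Set Q) (t : Q → List Q → Q → Q) : List Q → Q → Q :=
  fun h q =>
    let r := lastVisit F (fun k => (h ++ [q]).getD k q) h.length
    t ((h ++ [q]).getD r q) (h.drop r) q

end Plays

section Restart

variable {G : ParityGame Q} {V A F S : Set Q} {B : Q → Set Q} {t : Q → List Q → Q → Q}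
  {π : ℕ → Q}

lemma restartStrategy_legal {i : Bool} (ht : ∀ x, G.Legal i (t x)) :
    G.Legal i (restartStrategy F t) :=
  fun _ q hq => ht _ _ q hq

lemma restartStrategy_ofFn {r k : ℕ} (hr : lastVisit F π (r + k) = r) :
    restartStrategy F t (List.ofFn fun j : Fin (r + k) => π j) (π (r + k)) =
      t (π r) (List.ofFn fun j : Fin k => π (r + j)) (π (r + k)) := by
  have hpath : ∀ j ≤ r + k,
      ((List.ofFn fun j : Fin (r + k) => π j) ++ [π (r + k)]).getD j (π (r + k)) = π j := by
    intro j hj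
    rcases hj.lt_or_eq with h | rfl
    · simp [List.getD_eq_getElem?_getD, List.getElem?_append_left, h]
    · simp [List.getD_eq_getElem?_getD]
  have hdrop : (List.ofFn fun j : Fin (r + k) => π j).drop r =
      List.ofFn fun j : Fin k => π (r + j) := by
    apply List.ext_getElem <;> simp
  simp only [restartStrategy, List.length_ofFn]
  rw [lastVisit_congr hpath, hr, hpath r (by omega), hdrop]

lemma consistentUpTo_of_restartStrategy {i : Bool}
    (hc : G.Consistent i (restartStrategy F t) π) {r m : ℕ}
    (hr : ∀ k < m, lastVisit F π (r + k) = r) :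
    G.ConsistentUpTo i (t (π r)) (fun k => π (r + k)) m := fun k hk hi => by
  rw [← restartStrategy_ofFn (t := t) (hr k hk)]
  exact hc (r + k) hi

lemma disjoint_union_inter_union_diff (hVA : Disjoint V A)
    (hF : Disjoint F (V ∪ A)) (B : Set Q) : Disjoint (V ∪ F ∩ B) (A ∪ F \ B) := by
  rw [Set.disjoint_left]
  rintro q (hV | ⟨hF', hB⟩) (hA | ⟨hF'', hB'⟩)
  · exact hVA.ne_of_mem hV hA rfl
  · exact hF.ne_of_mem hF'' (Or.inl hV) rfl
  · exact hF.ne_of_mem hF' (Or.inr hA) rfl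
  · exact hB' hB

/-- Since the last visit to `F` the play has followed `t x`, so it is the prefix of a play won
in the game of `x`. -/
lemma notMem_of_restartStrategy (hVA : Disjoint V A) (hF : Disjoint F (V ∪ A))
    (ht : ∀ x, G.Legal false (t x))
    (hwin : ∀ x ∈ S, ∀ τ, G.IsPlay τ → τ 0 = x → G.Consistent false (t x) τ →
      G.EWinsPlay false (V ∪ F ∩ B x) (A ∪ F \ B x) τ)
    (hπ : G.IsPlay π) (hc : G.Consistent false (restartStrategy F t) π) {n : ℕ}
    (hS : π (lastVisit F π n) ∈ S) (hV : ∀ k, 1 ≤ k → k ≤ n + 1 → π k ∉ V) :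
    π (n + 1) ∉ A ∪ F \ B (π (lastVisit F π n)) := by
  set r := lastVisit F π n
  have hrn : r ≤ n := lastVisit_le n
  have hcons : G.ConsistentUpTo false (t (π r)) (fun k => π (r + k)) (n + 1 - r) :=
    consistentUpTo_of_restartStrategy hc fun k hk =>
      lastVisit_eq_of (by omega) (lastVisit_eq_zero_or_mem n)
        fun j hj hjk => notMem_of_lastVisit_lt hj (by omega)
  obtain ⟨τ, hτ, hτc, hτπ⟩ :=
    G.exists_consistent_of_consistentUpTo (ht _) (fun k => hπ (r + k)) hcons
  have hτwin := hwin _ hS τ hτ (hτπ 0 (Nat.zero_le _)) hτc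
  have hlast := G.notMem_of_eWinsPlay_false (disjoint_union_inter_union_diff hVA hF _) hτwin
    (m := n + 1 - r) (by omega) fun k hk hkm => by
      rw [hτπ k hkm.le]
      rintro (hkV | ⟨hkF, -⟩)
      exacts [hV _ (by omega) (by omega) hkV,
        notMem_of_lastVisit_lt (n := n) (by omega) (by omega) hkF]
  rwa [hτπ _ le_rfl, Nat.add_sub_cancel' (by omega)] at hlast

lemma lastVisit_mem_of_restartStrategy (hVA : Disjoint V A) (hF : Disjoint F (V ∪ A))
    (ht : ∀ x, G.Legal false (t x))
    (hwin : ∀ x ∈ S, ∀ τ, G.IsPlay τ → τ 0 = x → G.Consistent false (t x) τ →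
      G.EWinsPlay false (V ∪ F ∩ B x) (A ∪ F \ B x) τ)
    (hB : ∀ x ∈ S, F ∩ B x ⊆ S)
    (hπ : G.IsPlay π) (hc : G.Consistent false (restartStrategy F t) π) (h0 : π 0 ∈ S) :
    ∀ n, (∀ k, 1 ≤ k → k ≤ n → π k ∉ V) → π (lastVisit F π n) ∈ S
  | 0, _ => h0
  | n + 1, hV => by
    have ih := lastVisit_mem_of_restartStrategy hVA hF ht hwin hB hπ hc h0 n
      fun k hk hkn => hV k hk (by omega)
    have hnext := notMem_of_restartStrategy hVA hF ht hwin hπ hc ih hV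
    unfold lastVisit
    split_ifs with hn
    · exact hB _ ih ⟨hn, by_contra fun hB' => hnext (Or.inr ⟨hn, hB'⟩)⟩
    · exact ih

/-- After its last visit to `F`, a play following `restartStrategy F t` follows a single strategy
`t x`, so it inherits the parity condition from the game won by `t x`. -/
lemma winsPlay_of_restartStrategy (hwin : ∀ x ∈ S, ∀ τ, G.IsPlay τ → τ 0 = x →
      G.Consistent false (t x) τ → G.EWinsPlay false (V ∪ F ∩ B x) (A ∪ F \ B x) τ)
    (hπ : G.IsPlay π) (hc : G.Consistent false (restartStrategy F t) π) {N : ℕ}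
    (hS : π (lastVisit F π N) ∈ S) (hV : ∀ n, 1 ≤ n → π n ∉ V) (hN : ∀ n, N < n → π n ∉ F) :
    G.WinsPlay false π := by
  set r := lastVisit F π N
  have hFr : ∀ j, r < j → π j ∉ F := fun j hj =>
    if hjN : j ≤ N then notMem_of_lastVisit_lt hj hjN else hN j (by omega)
  have hr : ∀ k, lastVisit F π (r + k) = r := fun k =>
    lastVisit_eq_of (by omega) (lastVisit_eq_zero_or_mem N) fun j hj _ => hFr j hj
  have htail := hwin _ hS _ (fun k => hπ (r + k)) rfl fun k hk =>
    consistentUpTo_of_restartStrategy hc (m := k + 1) (fun j _ => hr j) k (by omega) hk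
  rcases htail with ⟨k, hk, hkV | ⟨hkF, -⟩, -⟩ | ⟨-, htail⟩
  · exact absurd hkV (hV _ (by omega))
  · exact absurd hkF (hFr _ (by omega))
  · exact (G.winsPlay_shift false π r).mp htail

/-- `hinf` handles the plays that visit `F` infinitely often; every other play is decided by the
strategy started at its last visit to `F`. -/
theorem subset_eWinRegion_false_of_restart (hVA : Disjoint V A) (hF : Disjoint F (V ∪ A))
    (hS : ∀ x ∈ S, x ∈ G.EWinRegion false (V ∪ F ∩ B x) (A ∪ F \ B x))
    (hB : ∀ x ∈ S, F ∩ B x ⊆ S)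
    (hinf : ∀ π : ℕ → Q, (∀ n, 1 ≤ n → π n ∉ V ∪ A) →
      (∀ n, π (n + 1) ∈ F → π (n + 1) ∈ B (π (lastVisit F π n))) →
      (∀ N, ∃ n, N ≤ n ∧ π n ∈ F) → G.WinsPlay false π) :
    S ⊆ G.EWinRegion false V A := by
  classical
  have hstrat : ∀ x, ∃ σ, G.Legal false σ ∧ (x ∈ S → ∀ τ, G.IsPlay τ → τ 0 = x →
      G.Consistent false σ τ → G.EWinsPlay false (V ∪ F ∩ B x) (A ∪ F \ B x) τ) := fun x =>
    if hx : x ∈ S then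
      let ⟨σ, hσ, hσwin⟩ := hS x hx
      ⟨σ, hσ, fun _ => hσwin⟩
    else ⟨fun _ => G.someSucc, fun _ q _ => G.R_someSucc q, fun h => absurd h hx⟩
  choose t ht hwin using hstrat
  intro x hx
  refine ⟨restartStrategy F t, restartStrategy_legal ht, fun π hπ h0 hc => ?_⟩
  have hmem := lastVisit_mem_of_restartStrategy hVA hF ht hwin hB hπ hc (h0 ▸ hx)
  have hstep : ∀ n, (∀ k, 1 ≤ k → k ≤ n + 1 → π k ∉ V) →
      π (n + 1) ∉ A ∪ F \ B (π (lastVisit F π n)) := fun n hV =>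
    notMem_of_restartStrategy hVA hF ht hwin hπ hc (hmem n fun k hk hkn => hV k hk (by omega)) hV
  by_cases hvisit : ∃ n, 1 ≤ n ∧ π n ∈ V
  · obtain ⟨hn, hnV⟩ := Nat.find_spec hvisit
    refine Or.inl ⟨_, hn, hnV, fun m hm hmn hmA => ?_⟩
    obtain ⟨m, rfl⟩ : ∃ m', m = m' + 1 := ⟨m - 1, by omega⟩
    exact hstep m (fun k hk hkm hkV => Nat.find_min hvisit (by omega) ⟨hk, hkV⟩) (Or.inl hmA)
  push Not at hvisit
  have hstep' : ∀ n, π (n + 1) ∉ A ∪ F \ B (π (lastVisit F π n)) := fun n =>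
    hstep n fun k hk _ => hvisit k hk
  have havoid : ∀ n, 1 ≤ n → π n ∉ V ∪ A := by
    rintro n hn (hnV | hnA)
    · exact hvisit n hn hnV
    · obtain ⟨n, rfl⟩ : ∃ m, n = m + 1 := ⟨n - 1, by omega⟩
      exact hstep' n (Or.inl hnA)
  refine Or.inr ⟨havoid, ?_⟩
  by_cases hfreq : ∀ N, ∃ n, N ≤ n ∧ π n ∈ F
  · exact hinf π havoid (fun n hn => by_contra fun hB' => hstep' n (Or.inr ⟨hn, hB'⟩)) hfreq
  · push Not at hfreq
    obtain ⟨N, hN⟩ := hfreq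
    exact winsPlay_of_restartStrategy hwin hπ hc (hmem N fun k hk _ => hvisit k hk) hvisit
      fun n hn => hN n hn.le

end Restart

section Dual

variable (G : ParityGame Q)

def dual : ParityGame Q where
  Q0 := G.Q1
  Q1 := G.Q0
  disj := G.disj.symm
  covers := by rw [Set.union_comm]; exact G.covers
  R := G.R
  total := G.total
  p q := G.p q + 1

lemma dual_nodes (i : Bool) : G.dual.nodes i = G.nodes !i := by
  cases i <;> rfl

lemma dual_winsPlay [Finite Q] (i : Bool) (π : ℕ → Q) :
    G.dual.WinsPlay i π ↔ G.WinsPlay (!i) π := by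
  have hinf : G.dual.InfPrio π = (· + 1) '' G.InfPrio π := by
    ext c
    refine ⟨fun h => ?_, ?_⟩
    · obtain ⟨n, -, hn⟩ := h 0
      refine ⟨G.p (π n), fun N => ?_, hn⟩
      obtain ⟨m, hm, hmc⟩ := h N
      exact ⟨m, hm, by simp only [dual] at hn hmc; omega⟩
    · rintro ⟨c, hc, rfl⟩ N
      obtain ⟨n, hn, hnc⟩ := hc N
      exact ⟨n, hn, by simp only [dual, hnc]⟩
  have hsInf : sInf (G.dual.InfPrio π) = sInf (G.InfPrio π) + 1 := by
    rw [hinf, ← Monotone.map_csInf (fun _ _ h => Nat.add_le_add_right h 1) (G.infPrio_nonempty π)]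
  cases i <;> simp [WinsPlay, hsInf, Nat.even_add_one, Nat.odd_add_one]

lemma dual_eWinRegion [Finite Q] (i : Bool) (V A : Set Q) :
    G.dual.EWinRegion i A V = G.EWinRegion (!i) V A := by
  have hplay : ∀ π, G.dual.EWinsPlay i A V π ↔ G.EWinsPlay (!i) V A π := fun π => by
    cases i <;> simp [EWinsPlay, dual_winsPlay, Set.union_comm]
  simp only [EWinRegion, Legal, Consistent, IsPlay, dual_nodes, hplay]
  rfl

end Dual

variable {G : ParityGame Q} {V A F : Set Q}

lemma monotone_compl_eWinRegion_false (G : ParityGame Q) (V A F : Set Q) :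
    Monotone fun Y : Set Q => (G.EWinRegion false (V ∪ (F \ Y)) (A ∪ (F ∩ Y)))ᶜ := by
  intro Y Y' hY
  refine Set.compl_subset_compl.mpr (G.eWinRegion_false_mono ?_ ?_ ?_)
  · exact Set.union_subset_union_right V (Set.sdiff_subset_sdiff_right hY)
  · exact Set.union_subset_union_right A (Set.inter_subset_inter_right F hY)
  · ext q
    simp only [Set.mem_union, Set.mem_sdiff, Set.mem_inter_iff]
    tauto

theorem compl_subset_eWinRegion_false (hVA : Disjoint V A) {d : ℕ} (hd : Even d)
    (hmin : ∀ q, q ∉ V ∪ A → d ≤ G.p q) (hF : F ⊆ {q | q ∉ V ∪ A ∧ G.p q = d}) {L : Set Q}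
    (hL : (G.EWinRegion false (V ∪ (F \ L)) (A ∪ (F ∩ L)))ᶜ = L) :
    Lᶜ ⊆ G.EWinRegion false V A := by
  refine subset_eWinRegion_false_of_restart (B := fun _ => Lᶜ) hVA
    (Set.disjoint_left.mpr fun q hq => (hF hq).1) (fun x hx => ?_)
    (fun _ _ => Set.inter_subset_right) fun π havoid _ hfreq => ?_
  · rw [← Set.sdiff_eq, Set.sdiff_compl]
    rwa [← hL, compl_compl] at hx
  · have hdmem : d ∈ G.InfPrio π := fun N =>
      let ⟨n, hn, hnF⟩ := hfreq N
      ⟨n, hn, (hF hnF).2⟩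
    have hdle : ∀ c ∈ G.InfPrio π, d ≤ c := fun c hc =>
      let ⟨n, hn, hnc⟩ := hc 1
      hnc ▸ hmin _ (havoid n hn)
    change Even (sInf (G.InfPrio π))
    rwa [IsLeast.csInf_eq ⟨hdmem, hdle⟩]

theorem lfp_subset_eWinRegion_true [Finite Q] (hVA : Disjoint V A) (hF : Disjoint F (V ∪ A))
    (hmono : Monotone fun Y : Set Q => (G.EWinRegion false (V ∪ (F \ Y)) (A ∪ (F ∩ Y)))ᶜ)
    (hsub : ∀ Y, (G.EWinRegion false (V ∪ (F \ Y)) (A ∪ (F ∩ Y)))ᶜ ⊆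
      G.EWinRegion true (V ∪ (F \ Y)) (A ∪ (F ∩ Y))) :
    OrderHom.lfp ⟨fun Y : Set Q => (G.EWinRegion false (V ∪ (F \ Y)) (A ∪ (F ∩ Y)))ᶜ, hmono⟩ ⊆
      G.EWinRegion true V A := by
  set f : Set Q →o Set Q := ⟨_, hmono⟩
  obtain ⟨rk, hrk⟩ := f.exists_rank_of_mem_lfp
  refine Set.Subset.trans ?_ (G.dual_eWinRegion false V A).subset
  refine subset_eWinRegion_false_of_restart (B := fun x => {y | y ∈ f.lfp ∧ rk y < rk x})
    hVA.symm (Set.union_comm V A ▸ hF) (fun x hx => ?_) (fun _ _ _ hy => hy.2.1)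
    fun π _ hchain hfreq => ?_
  · rw [G.dual_eWinRegion]
    exact hsub _ (hrk x hx)
  · exfalso
    set g : ℕ → ℕ := fun n => rk (π (lastVisit F π n))
    have hdrop : ∀ n, π (n + 1) ∈ F → g (n + 1) < g n := fun n hn => by
      simp only [g, lastVisit, if_pos hn]
      exact (hchain n hn).2
    have hg : Antitone g := antitone_nat_of_succ_le fun n => by
      by_cases hn : π (n + 1) ∈ F
      · exact (hdrop n hn).le
      · simp only [g, lastVisit, if_neg hn, le_rfl]
    obtain ⟨N, hN⟩ := WellFoundedLT.antitone_chain_condition hg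
    obtain ⟨n, hn, hnF⟩ := hfreq (N + 1)
    obtain ⟨n, rfl⟩ : ∃ m, n = m + 1 := ⟨n - 1, by omega⟩
    have := hdrop n hnF
    rw [← hN n (by omega), ← hN (n + 1) (by omega)] at this
    exact lt_irrefl _ this

def Determined (G : ParityGame Q) (V A : Set Q) : Prop :=
  G.EWinRegion false V A ∪ G.EWinRegion true V A = Set.univ

lemma Determined.compl_subset (h : G.Determined V A) :
    (G.EWinRegion false V A)ᶜ ⊆ G.EWinRegion true V A := fun q hq =>
  (Set.eq_univ_iff_forall.mp h q).resolve_left hq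

lemma determined_dual_iff [Finite Q] : G.dual.Determined A V ↔ G.Determined V A := by
  rw [Determined, Determined, G.dual_eWinRegion, G.dual_eWinRegion, Set.union_comm]
  rfl

lemma determined_of_forall_mem (hVA : Disjoint V A) (hall : V ∪ A = Set.univ) :
    G.Determined V A := by
  obtain rfl : Vᶜ = A := (IsCompl.of_eq hVA.eq_bot hall).compl_eq
  exact Set.eq_univ_of_univ_subset <| (G.force_union_force_compl false V).ge.trans <|
    Set.union_subset_union (G.force_subset_eWinRegion false V Vᶜ)
      (G.force_subset_eWinRegion true V Vᶜ)

theorem determined_of_even [Finite Q] (hVA : Disjoint V A) {d : ℕ} (hd : Even d)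
    (hmin : ∀ q, q ∉ V ∪ A → d ≤ G.p q) (hF : F ⊆ {q | q ∉ V ∪ A ∧ G.p q = d})
    (hsub : ∀ Y, G.Determined (V ∪ (F \ Y)) (A ∪ (F ∩ Y))) : G.Determined V A := by
  set f : Set Q →o Set Q := ⟨_, G.monotone_compl_eWinRegion_false V A F⟩
  refine Set.eq_univ_of_forall fun q => ?_
  by_cases hq : q ∈ f.lfp
  · exact Or.inr (lfp_subset_eWinRegion_true hVA (Set.disjoint_left.mpr fun q hq => (hF hq).1)
      _ (fun Y => (hsub Y).compl_subset) hq)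
  · exact Or.inl (compl_subset_eWinRegion_false hVA hd hmin hF f.map_lfp hq)

theorem determined [Finite Q] (G : ParityGame Q) {V A : Set Q} (hVA : Disjoint V A) :
    G.Determined V A := by
  induction hn : (V ∪ A)ᶜ.ncard using Nat.strong_induction_on generalizing V A with
  | _ n ih =>
  obtain hfree | ⟨q₀, hq₀⟩ := (V ∪ A)ᶜ.eq_empty_or_nonempty
  · exact determined_of_forall_mem hVA (Set.compl_empty_iff.mp hfree)
  set d := sInf (G.p '' (V ∪ A)ᶜ)
  have hmin : ∀ q, q ∉ V ∪ A → d ≤ G.p q := fun q hq => Nat.sInf_le ⟨q, hq, rfl⟩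
  obtain ⟨q₁, hq₁, hq₁d⟩ : d ∈ G.p '' (V ∪ A)ᶜ := Nat.sInf_mem ⟨_, q₀, hq₀, rfl⟩
  set F := {q | q ∉ V ∪ A ∧ G.p q = d}
  have hF : Disjoint F (V ∪ A) := Set.disjoint_left.mpr fun q hq => hq.1
  have hsub : ∀ B, G.Determined (V ∪ F ∩ B) (A ∪ F \ B) := fun B => by
    refine ih _ ?_ (disjoint_union_inter_union_diff hVA hF B) rfl
    have hunion : V ∪ F ∩ B ∪ (A ∪ F \ B) = V ∪ A ∪ F := by
      ext q
      simp only [Set.mem_union, Set.mem_inter_iff, Set.mem_sdiff]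
      tauto
    rw [← hn, hunion]
    refine Set.ncard_lt_ncard ⟨Set.compl_subset_compl.mpr Set.subset_union_left, fun h => ?_⟩
    exact h hq₁ (Or.inr ⟨hq₁, hq₁d⟩)
  rcases Nat.even_or_odd d with hd | hd
  · refine determined_of_even hVA hd hmin subset_rfl fun Y => ?_
    have := hsub Yᶜ
    rwa [← Set.sdiff_eq, Set.sdiff_compl] at this
  · rw [← determined_dual_iff]
    have hd' : Even (d + 1) := Nat.even_add_one.mpr (Nat.not_even_iff_odd.mpr hd)
    refine determined_of_even hVA.symm hd' (fun q hq => ?_) (fun q hq => ?_) fun Y =>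
      determined_dual_iff.mpr (hsub Y)
    · exact Nat.add_le_add_right (hmin q (Set.union_comm A V ▸ hq)) 1
    · exact ⟨Set.union_comm V A ▸ hq.1, congrArg (· + 1) hq.2⟩

end ParityGame

open ParityGame in
/-- APT recursion, even case: if the minimal priority `d` of the free nodes is
even and `F` is the set of free nodes of priority `d` (the head of the parity
sequence), then Player 1's winning region of the extended parity game equals
`μY. (Q \ Win₀(α', V ∪ (F \ Y), A ∪ (F ∩ Y)))`. -/
theorem apt_even_head {Q : Type} [Fintype Q] (G : ParityGame Q)
    (V A : Set Q) (hVA : Disjoint V A) (d : ℕ) (hd : Even d)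
    (hmin : ∀ q, q ∉ V ∪ A → d ≤ G.p q)
    (F : Set Q) (hF : F = {q | q ∉ V ∪ A ∧ G.p q = d})
    (hmono : Monotone (fun Y : Set Q =>
      (G.EWinRegion false (V ∪ (F \ Y)) (A ∪ (F ∩ Y)))ᶜ)) :
    G.EWinRegion true V A =
      OrderHom.lfp ⟨fun Y : Set Q =>
        (G.EWinRegion false (V ∪ (F \ Y)) (A ∪ (F ∩ Y)))ᶜ, hmono⟩ := by
  have hFfree : Disjoint F (V ∪ A) := Set.disjoint_left.mpr fun q hq => (hF ▸ hq).1
  refine Set.Subset.antisymm (fun q hq => by_contra fun hqL => ?_) ?_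
  · have hq0 := compl_subset_eWinRegion_false hVA hd hmin hF.subset
      (OrderHom.map_lfp ⟨_, hmono⟩) hqL
    exact Set.disjoint_left.mp (G.disjoint_eWinRegion hVA) hq0 hq
  · refine lfp_subset_eWinRegion_true hVA hFfree hmono fun Y => ?_
    have hdisj := disjoint_union_inter_union_diff hVA hFfree Yᶜ
    rw [← Set.sdiff_eq, Set.sdiff_compl] at hdisj
    exact (G.determined hdisj).compl_subset
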